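/- Protocol-level no-weak-dominance (separating profile), misreport case: With the same setup (σ = 1/2, k = ⌈n/2⌉, k − 1 others at v*, k − 1 others at ṽ, n − 2k + 1 others at s), suppose member i reports ṽ instead of v*. If ṽ ≠ s, then ṽ wins with score d(ṽ, s) > 0, and member i's true utility for the outcome is d(v*, s) − d(v*, ṽ) < d(v*, s). If ṽ = s, then no proposal is supported (s has all-zero utilities and v* has only k − 1 strictly positive entries), the status quo is retained, and member i's true utility is 0 < d(v*, s). In both cases the misreport yields strictly lower true utility than the d(v*, s) obtained by sincere voting, so no misreport weakly dominates sincere voting. -/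

import Mathlib

/-- The `k`-th largest entry of a vector (`k` counted from 1). -/
noncomputable def kthLargest {n : ℕ} (u : Fin n → ℝ) (k : ℕ) : ℝ :=
  ((List.ofFn u).insertionSort (fun a b => b ≤ a)).getD (k - 1) 0

lemma countP_ofFn {n : ℕ} (u : Fin n → ℝ) (p : ℝ → Bool) [DecidablePred fun j : Fin n => p (u j)] :
    (List.ofFn u).countP p = (Finset.univ.filter (fun j => p (u j))).card := by
  rw [List.ofFn_eq_map, List.countP_map]
  rw [Fin.univ_def, Finset.filter, Finset.card_def]
  simp only [Multiset.quot_mk_to_coe, Multiset.filter_coe, Multiset.coe_card,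
    List.countP_eq_length_filter]
  congr 1
  apply List.filter_congr
  intro b _
  simp [Function.comp]

section
variable {n k : ℕ}

lemma kthLargest_eq_max (u : Fin n → ℝ) (M : ℝ) (hk1 : 1 ≤ k) (hkn : k ≤ n)
    (hle : ∀ j, u j ≤ M)
    (hcount : k ≤ (Finset.univ.filter (fun j : Fin n => decide (u j = M) = true)).card) :
    kthLargest u k = M := by
  classical
  haveI : IsTotal ℝ (fun a b : ℝ => b ≤ a) := ⟨fun a b => le_total b a⟩
  haveI : IsTrans ℝ (fun a b : ℝ => b ≤ a) := ⟨fun a b c h1 h2 => le_trans h2 h1⟩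
  haveI : IsRefl ℝ (fun a b : ℝ => b ≤ a) := ⟨fun a => le_refl a⟩
  set l := (List.ofFn u).insertionSort (fun a b => b ≤ a) with hl
  have hperm : l.Perm (List.ofFn u) := List.perm_insertionSort _ _
  have hlen : l.length = n := by rw [hperm.length_eq, List.length_ofFn]
  have hsorted : l.Pairwise (fun a b : ℝ => b ≤ a) := List.pairwise_insertionSort _ _
  have hidx : k - 1 < l.length := by omega
  rw [kthLargest, ← hl, List.getD_eq_getElem _ _ hidx]
  have hmem : l[k-1] ∈ List.ofFn u := hperm.subset (l.getElem_mem hidx)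
  obtain ⟨j, hj⟩ := List.mem_ofFn.1 hmem
  have hxle : l[k-1] ≤ M := hj ▸ hle j
  rcases lt_or_eq_of_le hxle with hlt | heq
  · exfalso
    have hcp : l.countP (fun a => decide (a = M)) =
        (Finset.univ.filter (fun j : Fin n => decide (u j = M) = true)).card := by
      rw [hperm.countP_eq, countP_ofFn]
    have hdrop : (l.drop (k-1)).countP (fun a => decide (a = M)) = 0 := by
      rw [List.countP_eq_zero]
      intro y hy
      obtain ⟨i, hi, hiy⟩ := List.mem_iff_getElem.1 hy
      have hi' : k - 1 + i < l.length := by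
        have h2 := hi; rw [List.length_drop] at h2; omega
      have : y = l[k - 1 + i]'hi' := by
        rw [← hiy]; exact List.getElem_drop
      have hyx : y ≤ l[k-1] := by
        rw [this]
        exact hsorted.rel_get_of_le (a := ⟨k-1, hidx⟩)
          (b := ⟨k - 1 + i, hi'⟩) (by simp)
      simp only [decide_eq_true_eq]
      exact ne_of_lt (lt_of_le_of_lt hyx hlt)
    have hsplit : l.countP (fun a => decide (a = M)) =
        (l.take (k-1)).countP (fun a => decide (a = M)) + (l.drop (k-1)).countP (fun a => decide (a = M)) := by
      conv_lhs => rw [← List.take_append_drop (k-1) l]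
      rw [List.countP_append]
    have : l.countP (fun a => decide (a = M)) ≤ k - 1 := by
      rw [hsplit, hdrop, Nat.add_zero]
      calc (l.take (k-1)).countP (fun a => decide (a = M)) ≤ (l.take (k-1)).length := List.countP_le_length
        _ ≤ k - 1 := by rw [List.length_take]; omega
    omega
  · exact heq

lemma kthLargest_lt (u : Fin n → ℝ) (c : ℝ) (hk1 : 1 ≤ k) (hkn : k ≤ n)
    (hcard : (Finset.univ.filter (fun j : Fin n => decide (c ≤ u j) = true)).card < k) :
    kthLargest u k < c := by
  classical
  haveI : IsTotal ℝ (fun a b : ℝ => b ≤ a) := ⟨fun a b => le_total b a⟩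
  haveI : IsTrans ℝ (fun a b : ℝ => b ≤ a) := ⟨fun a b c h1 h2 => le_trans h2 h1⟩
  haveI : IsRefl ℝ (fun a b : ℝ => b ≤ a) := ⟨fun a => le_refl a⟩
  set l := (List.ofFn u).insertionSort (fun a b => b ≤ a) with hl
  have hperm : l.Perm (List.ofFn u) := List.perm_insertionSort _ _
  have hlen : l.length = n := by rw [hperm.length_eq, List.length_ofFn]
  have hsorted : l.Pairwise (fun a b : ℝ => b ≤ a) := List.pairwise_insertionSort _ _
  have hidx : k - 1 < l.length := by omega
  rw [kthLargest, ← hl, List.getD_eq_getElem _ _ hidx]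
  by_contra hcon
  push_neg at hcon
  have htake : (l.take k).countP (fun a => decide (c ≤ a)) = k := by
    rw [List.countP_eq_length.2, List.length_take]; omega
    intro y hy
    obtain ⟨i, hi, hiy⟩ := List.mem_iff_getElem.1 hy
    have hik : i < k := lt_of_lt_of_le hi (by rw [List.length_take]; omega)
    have : y = l[i]'(by omega) := by rw [← hiy]; exact List.getElem_take
    have hxy : l[k-1] ≤ y := by
      rw [this]
      exact hsorted.rel_get_of_le (a := ⟨i, by omega⟩) (b := ⟨k-1, hidx⟩)
        (by simp; omega)
    simp only [decide_eq_true_eq]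
    exact le_trans hcon hxy
  have hcp : l.countP (fun a => decide (c ≤ a)) =
      (Finset.univ.filter (fun j : Fin n => decide (c ≤ u j) = true)).card := by
    rw [hperm.countP_eq, countP_ofFn]
  have hsplit : l.countP (fun a => decide (c ≤ a)) =
      (l.take k).countP (fun a => decide (c ≤ a)) + (l.drop k).countP (fun a => decide (c ≤ a)) := by
    conv_lhs => rw [← List.take_append_drop k l]
    rw [List.countP_append]
  omega

lemma kthLargest_zero (u : Fin n → ℝ) (h : ∀ j, u j = 0) : kthLargest u k = 0 := by
  classical
  set l := (List.ofFn u).insertionSort (fun a b => b ≤ a) with hl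
  rw [kthLargest, ← hl]
  rcases lt_or_ge (k-1) l.length with hlt | hge
  · rw [List.getD_eq_getElem _ _ hlt]
    have hmem : l[k-1] ∈ List.ofFn u := (List.perm_insertionSort _ _).subset (l.getElem_mem hlt)
    obtain ⟨j, hj⟩ := List.mem_ofFn.1 hmem
    rw [← hj, h]
  · exact List.getD_eq_default _ _ hge

end

/-- Separating profile, misreport case. With `σ = 1/2`, `k = ⌈n/2⌉`,
`k − 1` voters at `v*`, `k` voters (including member `i`) at `ṽ`, and the rest at `s`:
if `ṽ ≠ s` then `ṽ` wins with score `d(ṽ, s) > 0` and member `i`'s true utility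
`d(v*, s) − d(v*, ṽ) < d(v*, s)`; if `ṽ = s` then no proposal is supported, the status
quo is retained, and member `i`'s true utility is `0 < d(v*, s)`. -/
theorem separating_profile_misreport
    {X : Type*} [MetricSpace X] {n : ℕ} (hn : 0 < n)
    (k : ℕ) (hk : k = (n + 1) / 2)
    (s vstar vt : X) (hvs : vstar ≠ s) (hvt : vt ≠ vstar)
    (i : Fin n)
    (A B : Finset (Fin n)) (hAB : Disjoint A B)
    (hA : A.card = k - 1) (hB : B.card = k) (hiB : i ∈ B)
    (reported : Fin n → X)
    (hrA : ∀ j ∈ A, reported j = vstar)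
    (hrB : ∀ j ∈ B, reported j = vt)
    (hrS : ∀ j : Fin n, j ∉ A → j ∉ B → reported j = s) :
    (vt ≠ s →
      kthLargest (fun j => dist (reported j) s - dist (reported j) vt) k = dist vt s ∧
      0 < dist vt s ∧
      (k ≤ {j : Fin n | 0 < dist (reported j) s - dist (reported j) vt}.ncard) ∧
      kthLargest (fun j => dist (reported j) s - dist (reported j) vstar) k <
        kthLargest (fun j => dist (reported j) s - dist (reported j) vt) k ∧
      dist vstar s - dist vstar vt < dist vstar s) ∧
    (vt = s →
      kthLargest (fun j => dist (reported j) s - dist (reported j) vt) k = 0 ∧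
      {j : Fin n | 0 < dist (reported j) s - dist (reported j) vt}.ncard < k ∧
      {j : Fin n | 0 < dist (reported j) s - dist (reported j) vstar}.ncard = k - 1 ∧
      {j : Fin n | 0 < dist (reported j) s - dist (reported j) vstar}.ncard < k ∧
      0 < dist vstar s) := by
  classical
  have hk1 : 1 ≤ k := by omega
  have hkn : k ≤ n := by omega
  constructor
  · intro hvts
    have hdvt : 0 < dist vt s := dist_pos.2 hvts
    have hB1 : ∀ j ∈ B, dist (reported j) s - dist (reported j) vt = dist vt s := by
      intro j hj
      rw [hrB j hj, dist_self]
      ring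
    have h1 : kthLargest (fun j => dist (reported j) s - dist (reported j) vt) k
        = dist vt s := by
      apply kthLargest_eq_max _ _ hk1 hkn
      · intro j
        have := dist_triangle (reported j) vt s
        show dist (reported j) s - dist (reported j) vt ≤ dist vt s
        linarith
      · have hsub : B ⊆ Finset.univ.filter
            (fun j : Fin n =>
              decide ((fun j => dist (reported j) s - dist (reported j) vt) j = dist vt s)
                = true) := by
          intro j hj
          simp only [Finset.mem_filter, Finset.mem_univ, decide_eq_true_eq, true_and]
          exact hB1 j hj
        calc k = B.card := hB.symm
          _ ≤ _ := Finset.card_le_card hsub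
    refine ⟨h1, hdvt, ?_, ?_, ?_⟩
    · have hsub : (↑B : Set (Fin n)) ⊆
          {j : Fin n | 0 < dist (reported j) s - dist (reported j) vt} := by
        intro j hj
        simp only [Set.mem_setOf_eq]
        rw [hB1 j (by exact_mod_cast hj)]
        exact hdvt
      calc k = B.card := hB.symm
        _ = (↑B : Set (Fin n)).ncard := (Set.ncard_coe_finset B).symm
        _ ≤ _ := Set.ncard_le_ncard hsub (Set.toFinite _)
    · rw [h1]
      apply kthLargest_lt _ _ hk1 hkn
      have hsub : Finset.univ.filter
          (fun j : Fin n =>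
            decide (dist vt s ≤ (fun j => dist (reported j) s - dist (reported j) vstar) j)
              = true) ⊆ A := by
        intro j hj
        simp only [Finset.mem_filter, Finset.mem_univ, decide_eq_true_eq, true_and] at hj
        by_contra hjA
        by_cases hjB : j ∈ B
        · rw [hrB j hjB] at hj
          have h0 : 0 < dist vt vstar := dist_pos.2 hvt
          linarith
        · rw [hrS j hjA hjB] at hj
          have h2 : (0:ℝ) ≤ dist s vstar := dist_nonneg
          rw [dist_self] at hj
          linarith
      calc (Finset.univ.filter _).card ≤ A.card := Finset.card_le_card hsub
        _ = k - 1 := hA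
        _ < k := by omega
    · have h0 : 0 < dist vstar vt := dist_pos.2 (Ne.symm hvt)
      linarith
  · intro hvts
    have hset : {j : Fin n | 0 < dist (reported j) s - dist (reported j) vstar}
        = (↑A : Set (Fin n)) := by
      ext j
      simp only [Set.mem_setOf_eq, Finset.mem_coe]
      constructor
      · intro h
        by_contra hjA
        by_cases hjB : j ∈ B
        · rw [hrB j hjB, hvts, dist_self] at h
          have h2 : (0:ℝ) ≤ dist s vstar := dist_nonneg
          linarith
        · rw [hrS j hjA hjB, dist_self] at h
          have h2 : (0:ℝ) ≤ dist s vstar := dist_nonneg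
          linarith
      · intro hjA
        rw [hrA j hjA, dist_self]
        have := dist_pos.2 hvs
        linarith
    refine ⟨?_, ?_, ?_, ?_, dist_pos.2 hvs⟩
    · apply kthLargest_zero
      intro j
      rw [hvts]
      ring
    · have hempty : {j : Fin n | 0 < dist (reported j) s - dist (reported j) vt} = ∅ := by
        ext j; simp [hvts]
      rw [hempty, Set.ncard_empty]
      omega
    · rw [hset, Set.ncard_coe_finset, hA]
    · rw [hset, Set.ncard_coe_finset, hA]
      omega
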